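/- Let G be a symmetric 2×2 integer matrix whose two diagonal entries are even, with det G < 0 (indefinite), and such that 3·G⁻¹ has integer entries (i.e. there exists an integer matrix N with G·N = 3·I). Then G is integrally congruent either to [[0,1],[1,0]] or to [[0,3],[3,0]]: there exists P ∈ GL₂(ℤ) with Pᵀ G P = [[0,1],[1,0]] or Pᵀ G P = [[0,3],[3,0]]. -/

import Mathlib

/-!
An even symmetric `G` is the Gram matrix `!![2a, b; b, 2c]` of the binary form
`a x² + b x y + c y²`, and `det G = -(b² - 4ac)`. From `G N = 3 • 1` we get `det G ∣ 9`; since a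
discriminant is `0` or `1` mod `4`, it equals `1` or `9`. Discriminant `1` is a square, so the
form has a primitive isotropic vector; completing it to a basis gives `!![0, β; β, 2γ]` with
`β = ±1`, which is congruent to `U`. For discriminant `9`, the integral matrix `N = 3 G⁻¹` equals
`-adj G / 3`, so `3` divides `G`, and `G / 3` has discriminant `1`: hence `G` is congruent to
`U(3)`.
-/

open Matrix

namespace Matrix

variable {n R : Type*} [Fintype n] [DecidableEq n] [CommRing R]

def Congruent (A B : Matrix n n R) : Prop :=
  ∃ P : Matrix n n R, IsUnit P.det ∧ Pᵀ * A * P = B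

namespace Congruent

theorem trans {A B C : Matrix n n R} (hAB : Congruent A B) (hBC : Congruent B C) :
    Congruent A C := by
  obtain ⟨P, hP, rfl⟩ := hAB
  obtain ⟨Q, hQ, rfl⟩ := hBC
  refine ⟨P * Q, ?_, ?_⟩
  · rw [det_mul]
    exact hP.mul hQ
  · simp only [transpose_mul, Matrix.mul_assoc]

theorem smul {A B : Matrix n n R} (h : Congruent A B) (k : R) : Congruent (k • A) (k • B) := by
  obtain ⟨P, hP, rfl⟩ := h
  exact ⟨P, hP, by rw [Matrix.mul_smul, Matrix.smul_mul]⟩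

theorem det_eq {A B : Matrix n n ℤ} (h : Congruent A B) : B.det = A.det := by
  obtain ⟨P, hP, rfl⟩ := h
  rw [det_mul, det_mul, det_transpose]
  linear_combination A.det * Int.isUnit_sq hP

end Congruent

theorem smul_adjugate_eq_det_smul {G N : Matrix n n R} {k : R} (h : G * N = k • 1) :
    k • adjugate G = G.det • N :=
  calc k • adjugate G = adjugate G * (G * N) := by rw [h, Matrix.mul_smul, Matrix.mul_one]
    _ = G.det • N := by rw [← Matrix.mul_assoc, adjugate_mul, Matrix.smul_mul, Matrix.one_mul]

theorem det_dvd_pow_of_mul_eq_smul_one {G N : Matrix n n R} {k : R} (h : G * N = k • 1) :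
    G.det ∣ k ^ Fintype.card n :=
  ⟨N.det, by rw [← det_mul, h, det_smul, det_one, mul_one]⟩

end Matrix

section BinaryForm

variable {R : Type*} [CommRing R]

/-- Gram matrix of the binary quadratic form `a x² + b x y + c y²`. -/
def binaryGram (a b c : R) : Matrix (Fin 2) (Fin 2) R := !![2 * a, b; b, 2 * c]

theorem exists_eq_binaryGram {G : Matrix (Fin 2) (Fin 2) R} (hG : G.IsSymm)
    (heven : Even (G 0 0) ∧ Even (G 1 1)) : ∃ a b c, G = binaryGram a b c := by
  obtain ⟨⟨a, ha⟩, ⟨c, hc⟩⟩ := heven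
  refine ⟨a, G 0 1, c, ?_⟩
  ext i j
  fin_cases i <;> fin_cases j <;> simp [binaryGram, ha, hc, two_mul, hG.apply 0 1]

theorem det_binaryGram (a b c : R) : (binaryGram a b c).det = -discrim a b c := by
  rw [binaryGram, det_fin_two_of, discrim]
  ring

theorem binaryGram_mul_left (k a b c : R) :
    binaryGram (k * a) (k * b) (k * c) = k • binaryGram a b c := by
  ext i j
  fin_cases i <;> fin_cases j <;> simp [binaryGram, mul_left_comm]

theorem adjugate_binaryGram (a b c : R) :
    adjugate (binaryGram a b c) = !![2 * c, -b; -b, 2 * a] :=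
  adjugate_fin_two_of _ _ _ _

theorem congruent_binaryGram_of_isCoprime {a b c x y : R} (hxy : IsCoprime x y)
    (hq : a * x ^ 2 + b * x * y + c * y ^ 2 = 0) :
    ∃ β γ : R, (binaryGram a b c).Congruent (binaryGram 0 β γ) := by
  -- Complete `(x, y)` to a basis with the Bézout coefficients.
  obtain ⟨u, v, huv⟩ := hxy
  refine ⟨-2 * a * x * v + b * (x * u - y * v) + 2 * c * y * u, a * v ^ 2 - b * u * v + c * u ^ 2,
    !![x, -v; y, u], ?_, ?_⟩
  · rw [det_fin_two_of]
    exact IsUnit.of_mul_eq_one 1 (by linear_combination huv)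
  · ext i j
    fin_cases i <;> fin_cases j <;>
      simp only [binaryGram, Matrix.mul_apply, transpose_apply, of_apply, cons_val', cons_val_zero,
        cons_val_one, cons_val_fin_one, Fin.sum_univ_two, Fin.isValue, Fin.mk_one, Fin.zero_eta]
    · linear_combination 2 * hq
    all_goals ring

theorem congruent_hyperbolic_of_sq_eq_one {β γ : R} (hβ : β ^ 2 = 1) :
    (binaryGram 0 β γ).Congruent !![0, 1; 1, 0] := by
  refine ⟨!![β, -β * γ; 0, 1], ?_, ?_⟩
  · rw [det_fin_two_of]
    exact IsUnit.of_mul_eq_one β (by linear_combination hβ)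
  · ext i j
    fin_cases i <;> fin_cases j <;>
      simp only [binaryGram, Matrix.mul_apply, transpose_apply, of_apply, cons_val', cons_val_zero,
        cons_val_one, cons_val_fin_one, Fin.sum_univ_two, Fin.isValue, Fin.mk_one, Fin.zero_eta]
    · ring
    · linear_combination hβ
    · linear_combination hβ
    · linear_combination (-2 * γ) * hβ

end BinaryForm

theorem exists_isCoprime_isotropic_of_discrim_eq_mul_self {a b c r : ℤ}
    (h : discrim a b c = r * r) :
    ∃ x y : ℤ, IsCoprime x y ∧ a * x ^ 2 + b * x * y + c * y ^ 2 = 0 := by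
  rcases eq_or_ne a 0 with rfl | ha
  · exact ⟨1, 0, isCoprime_one_left, by ring⟩
  -- `(b + r, -2a)` is an isotropic vector; divide out its content.
  have hiso : a * (b + r) ^ 2 + b * (b + r) * (-2 * a) + c * (-2 * a) ^ 2 = 0 := by
    rw [discrim] at h
    linear_combination (-a) * h
  obtain ⟨g, x, y, hg, hxy, hx, hy⟩ :=
    Int.exists_gcd_one' (Int.gcd_pos_of_ne_zero_right (b + r) (by simpa using ha : -2 * a ≠ 0))
  refine ⟨x, y, Int.isCoprime_iff_gcd_eq_one.mpr hxy, ?_⟩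
  rw [hx, hy] at hiso
  have hg0 : (g : ℤ) ^ 2 ≠ 0 := by positivity
  exact (mul_eq_zero.mp (by linear_combination hiso : (g : ℤ) ^ 2 * _ = 0)).resolve_left hg0

theorem congruent_hyperbolic_of_discrim_eq_one {a b c : ℤ} (h : discrim a b c = 1) :
    (binaryGram a b c).Congruent !![0, 1; 1, 0] := by
  obtain ⟨x, y, hxy, hq⟩ :=
    exists_isCoprime_isotropic_of_discrim_eq_mul_self (r := 1) (by rw [h, mul_one])
  obtain ⟨β, γ, hG⟩ := congruent_binaryGram_of_isCoprime hxy hq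
  have hβ : β ^ 2 = 1 := by
    have hdet := hG.det_eq
    rw [det_binaryGram, det_binaryGram, h, discrim] at hdet
    linear_combination -hdet
  exact hG.trans (congruent_hyperbolic_of_sq_eq_one hβ)

theorem Int.discrim_emod_four_eq_zero_or_one (a b c : ℤ) :
    discrim a b c % 4 = 0 ∨ discrim a b c % 4 = 1 := by
  obtain ⟨t, rfl | rfl⟩ := Int.even_or_odd' b
  · have : discrim a (2 * t) c = 4 * (t ^ 2 - a * c) := by rw [discrim]; ring
    omega
  · have : discrim a (2 * t + 1) c = 4 * (t ^ 2 + t - a * c) + 1 := by rw [discrim]; ring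
    omega

theorem discrim_eq_one_or_nine {a b c : ℤ} (hpos : 0 < discrim a b c) (hdvd : discrim a b c ∣ 9) :
    discrim a b c = 1 ∨ discrim a b c = 9 := by
  have hmod := Int.discrim_emod_four_eq_zero_or_one a b c
  have hle := Int.le_of_dvd (by norm_num) hdvd
  generalize discrim a b c = d at *
  interval_cases d <;> omega

theorem dvd_of_binaryGram_mul_eq_smul_one {a b c k : ℤ} {N : Matrix (Fin 2) (Fin 2) ℤ}
    (hk : k ≠ 0) (hN : binaryGram a b c * N = k • 1) (hD : discrim a b c = k ^ 2) :
    k ∣ 2 * a ∧ k ∣ b ∧ k ∣ 2 * c := by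
  have hadj : adjugate (binaryGram a b c) = -k • N := by
    refine smul_right_injective _ hk ?_
    dsimp only
    rw [smul_adjugate_eq_det_smul hN, det_binaryGram, hD, smul_smul]
    ring_nf
  rw [adjugate_binaryGram] at hadj
  have h00 := congrFun (congrFun hadj 0) 0
  have h01 := congrFun (congrFun hadj 0) 1
  have h11 := congrFun (congrFun hadj 1) 1
  simp only [of_apply, cons_val', cons_val_zero, cons_val_one, cons_val_fin_one,
    Matrix.smul_apply, smul_eq_mul] at h00 h01 h11
  exact ⟨⟨-N 1 1, by linear_combination h11⟩, ⟨N 0 1, by linear_combination -h01⟩,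
    ⟨-N 0 0, by linear_combination h00⟩⟩

theorem congruent_three_hyperbolic_of_discrim_eq_nine {a b c : ℤ} {N : Matrix (Fin 2) (Fin 2) ℤ}
    (hN : binaryGram a b c * N = 3 • 1) (hD : discrim a b c = 9) :
    (binaryGram a b c).Congruent !![0, 3; 3, 0] := by
  obtain ⟨ha, ⟨b', rfl⟩, hc⟩ :=
    dvd_of_binaryGram_mul_eq_smul_one three_ne_zero hN (by rw [hD]; norm_num)
  obtain ⟨a', rfl⟩ : (3 : ℤ) ∣ a := by omega
  obtain ⟨c', rfl⟩ : (3 : ℤ) ∣ c := by omega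
  have hD' : discrim a' b' c' = 1 := by
    refine mul_left_cancel₀ (by norm_num : (9 : ℤ) ≠ 0) ?_
    rw [discrim] at hD ⊢
    linear_combination hD
  have hU3 : (3 : ℤ) • !![(0 : ℤ), 1; 1, 0] = !![0, 3; 3, 0] := by
    ext i j
    fin_cases i <;> fin_cases j <;> rfl
  rw [binaryGram_mul_left, ← hU3]
  exact (congruent_hyperbolic_of_discrim_eq_one hD').smul 3

/-- The indefinite half of the classification of rank-2 3-elementary even lattices:
a symmetric 2×2 integer matrix `G` with even diagonal, negative determinant, and
`3·G⁻¹` integral is integrally congruent to `U = [[0,1],[1,0]]` or to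
`U(3) = [[0,3],[3,0]]`. -/
theorem indefinite_even_three_elementary_rank_two_is_U_or_U3
    (G : Matrix (Fin 2) (Fin 2) ℤ)
    (hsymm : G.IsSymm)
    (heven : Even (G 0 0) ∧ Even (G 1 1))
    (hindef : G.det < 0)
    (helem : ∃ N : Matrix (Fin 2) (Fin 2) ℤ, G * N = 3 • (1 : Matrix (Fin 2) (Fin 2) ℤ)) :
    ∃ P : Matrix (Fin 2) (Fin 2) ℤ, IsUnit P.det ∧
      (Pᵀ * G * P = !![0, 1; 1, 0] ∨ Pᵀ * G * P = !![0, 3; 3, 0]) := by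
  obtain ⟨a, b, c, rfl⟩ := exists_eq_binaryGram hsymm heven
  obtain ⟨N, hN⟩ := helem
  rw [det_binaryGram, neg_neg_iff_pos] at hindef
  have hdvd : discrim a b c ∣ 9 := by
    simpa [det_binaryGram] using det_dvd_pow_of_mul_eq_smul_one hN
  rcases discrim_eq_one_or_nine hindef hdvd with hD | hD
  · obtain ⟨P, hP, hPG⟩ := congruent_hyperbolic_of_discrim_eq_one hD
    exact ⟨P, hP, Or.inl hPG⟩
  · obtain ⟨P, hP, hPG⟩ := congruent_three_hyperbolic_of_discrim_eq_nine hN hD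
    exact ⟨P, hP, Or.inr hPG⟩
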